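/- For a symmetric bilinear form B on an n-dimensional inner product space and the inner product of double forms, s₁ = ⟨g^{n−1}/(n−1)!, ⋆⁻¹(B-dual)⟩ equals tr(B); equivalently, ⋆(g^{n−1}·B)/(n−1)! = tr(B). -/

import Mathlib

open scoped BigOperators RealInnerProductSpace

/-- A `(p,q)`-double form on `V` (function version). -/
abbrev DForm (V : Type*) (p q : ℕ) : Type _ := (Fin p → V) → (Fin q → V) → ℝ

/-- Wedge product of (alternating) `p`-forms, determinant convention. -/
noncomputable def wedgeF {V : Type*} {p q : ℕ} (α : (Fin p → V) → ℝ) (β : (Fin q → V) → ℝ) :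
    (Fin (p + q) → V) → ℝ := fun x =>
  (1 / (p.factorial * q.factorial : ℝ)) *
    ∑ σ : Equiv.Perm (Fin (p + q)),
      ((Equiv.Perm.sign σ : ℤ) : ℝ) *
        (α fun i => x (σ (Fin.castAdd q i))) * (β fun j => x (σ (Fin.natAdd p j)))

/-- Exterior (Kulkarni–Nomizu type) product of double forms. -/
noncomputable def dmul {V : Type*} {p q r s : ℕ} (ω : DForm V p q) (η : DForm V r s) :
    DForm V (p + r) (q + s) := fun x y =>
  (1 / (p.factorial * r.factorial * q.factorial * s.factorial : ℝ)) *
    ∑ σ : Equiv.Perm (Fin (p + r)), ∑ τ : Equiv.Perm (Fin (q + s)),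
      ((Equiv.Perm.sign σ : ℤ) : ℝ) * ((Equiv.Perm.sign τ : ℤ) : ℝ) *
        ω (fun i => x (σ (Fin.castAdd r i))) (fun j => y (τ (Fin.castAdd s j))) *
        η (fun i => x (σ (Fin.natAdd p i))) (fun j => y (τ (Fin.natAdd q j)))

/-- Reindexing a double form along equalities of the bidegree. -/
def castD {V : Type*} {p q p' q' : ℕ} (hp : p = p') (hq : q = q') (ω : DForm V p q) :
    DForm V p' q' := fun x y => ω (fun i => x (Fin.cast hp i)) (fun j => y (Fin.cast hq j))

/-- Tensor product of two forms, as a double form. -/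
def tmulD {V : Type*} {p q : ℕ} (α : (Fin p → V) → ℝ) (β : (Fin q → V) → ℝ) : DForm V p q :=
  fun x y => α x * β y

/-- Powers of a double form for the exterior product. -/
noncomputable def dpow {V : Type*} {a b : ℕ} (ω : DForm V a b) : (k : ℕ) → DForm V (a * k) (b * k)
  | 0 => fun _ _ => 1
  | k + 1 => dmul (dpow ω k) ω

/-- The metric, as a `(1,1)`-double form. -/
noncomputable def gmetric {V : Type*} [NormedAddCommGroup V] [InnerProductSpace ℝ V] :
    DForm V 1 1 := fun x y => (inner ℝ (x 0) (y 0) : ℝ)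

/-- A symmetric bilinear form as a `(1,1)`-double form. -/
def bilinD {V : Type*} [AddCommGroup V] [Module ℝ V] (B : V →ₗ[ℝ] V →ₗ[ℝ] ℝ) : DForm V 1 1 :=
  fun x y => B (x 0) (y 0)

/-- The scalar given by a `(0,0)`-double form. -/
def toScalar {V : Type*} (ω : DForm V 0 0) : ℝ := ω Fin.elim0 Fin.elim0

/-- Ricci contraction of a double form with respect to an orthonormal basis. -/
noncomputable def cD {V : Type*} [NormedAddCommGroup V] [InnerProductSpace ℝ V] {n : ℕ}
    (b : OrthonormalBasis (Fin n) ℝ V) {p q : ℕ} (ω : DForm V (p + 1) (q + 1)) : DForm V p q :=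
  fun x y => ∑ i : Fin n, ω (Fin.cons (b i) x) (Fin.cons (b i) y)

/-- Iterated Ricci contraction. -/
noncomputable def cIter {V : Type*} [NormedAddCommGroup V] [InnerProductSpace ℝ V] {n : ℕ}
    (b : OrthonormalBasis (Fin n) ℝ V) :
    ∀ (m : ℕ) {p q : ℕ}, DForm V (p + m) (q + m) → DForm V p q
  | 0, _, _, ω => ω
  | m + 1, _, _, ω => cIter b m (cD b ω)

/-- Symmetry of a `(p,p)`-double form. -/
def IsSymmD {V : Type*} {p : ℕ} (ω : DForm V p p) : Prop := ∀ x y, ω x y = ω y x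

/-- A double form is alternating in each group of arguments. -/
def IsAltD {V : Type*} {p q : ℕ} (ω : DForm V p q) : Prop :=
  (∀ (σ : Equiv.Perm (Fin p)) (x : Fin p → V) (y : Fin q → V),
      ω (x ∘ σ) y = ((Equiv.Perm.sign σ : ℤ) : ℝ) * ω x y) ∧
  (∀ (τ : Equiv.Perm (Fin q)) (x : Fin p → V) (y : Fin q → V),
      ω x (y ∘ τ) = ((Equiv.Perm.sign τ : ℤ) : ℝ) * ω x y)

/-- A double form is multilinear in each argument. -/
def IsMultilinearD {V : Type*} [AddCommGroup V] [Module ℝ V] {p q : ℕ}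
    (ω : DForm V p q) : Prop :=
  (∀ (x : Fin p → V) (i : Fin p) (u v : V) (c : ℝ) (y : Fin q → V),
      ω (Function.update x i (u + c • v)) y
        = ω (Function.update x i u) y + c * ω (Function.update x i v) y) ∧
  (∀ (x : Fin p → V) (y : Fin q → V) (j : Fin q) (u v : V) (c : ℝ),
      ω x (Function.update y j (u + c • v))
        = ω x (Function.update y j u) + c * ω x (Function.update y j v))

/-- The first Bianchi identity for a `(p,q)`-double form. -/
def FirstBianchiD {V : Type*} {p q : ℕ} (ω : DForm V p q) : Prop :=
  ∀ (x : Fin (p + 1) → V) (y : Fin q → V),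
    ∑ i : Fin (p + 1), ((-1 : ℝ) ^ (i : ℕ)) * ω (i.removeNth x) y = 0

/-- The volume form associated to an (oriented) orthonormal basis, extended by `0`
to tuples of the wrong length. -/
noncomputable def volA {V : Type*} [NormedAddCommGroup V] [InnerProductSpace ℝ V] {n : ℕ}
    (b : OrthonormalBasis (Fin n) ℝ V) {m : ℕ} (v : Fin m → V) : ℝ :=
  if h : m = n then
    Matrix.det (Matrix.of fun i j : Fin n => (inner ℝ (b i) (v (Fin.cast h.symm j)) : ℝ)) else 0

/-- Generalized Hodge star operator on double forms. -/
noncomputable def starD {V : Type*} [NormedAddCommGroup V] [InnerProductSpace ℝ V] {n : ℕ}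
    (b : OrthonormalBasis (Fin n) ℝ V) {p q : ℕ} (ω : DForm V p q) :
    DForm V (n - p) (n - q) := fun x y =>
  (1 / (p.factorial * q.factorial : ℝ)) *
    ∑ i : Fin p → Fin n, ∑ j : Fin q → Fin n,
      ω (fun a => b (i a)) (fun a => b (j a)) *
        volA b (Fin.append (fun a => b (i a)) x) * volA b (Fin.append (fun a => b (j a)) y)

/-- The scalar `⋆ω` of an `(n,n)`-double form. -/
noncomputable def starScalar {V : Type*} [NormedAddCommGroup V] [InnerProductSpace ℝ V] {n : ℕ}
    (b : OrthonormalBasis (Fin n) ℝ V) (ω : DForm V n n) : ℝ :=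
  toScalar (castD (Nat.sub_self n) (Nat.sub_self n) (starD b ω))

/-!
The exterior product of double forms is alternating in each group of arguments, so its Hodge
star is simply its value on the oriented orthonormal basis, taken in both slots. Both `g^k` and
`g^{n-1}·B` are alternations of tensor products, since an alternation inside an exterior product
is absorbed by the outer one. On an orthonormal frame `e`, the value of `g^{n-1}·B` is therefore
a double sum over permutations `ρ, π` of `∏_{i<n-1} ⟨e_{ρ i}, e_{π i}⟩ · B(e_{ρ last}, e_{π last})`.
Orthonormality kills every term with `ρ ≠ π`, which leaves `(n-1)! · ∑_j B(e_j, e_j)`.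
-/

open Equiv

local notation "ε " σ:max => ((Equiv.Perm.sign σ : ℤ) : ℝ)

lemma sign_cast_mul_self {α : Type*} [DecidableEq α] [Fintype α] (σ : Perm α) :
    ε σ * ε σ = 1 := by
  rw [← Int.cast_mul, ← Units.val_mul, Int.units_mul_self, Units.val_one, Int.cast_one]

lemma sum_sign_mul_mul_left {α : Type*} [DecidableEq α] [Fintype α] (σ : Perm α)
    (f : Perm α → ℝ) : ∑ τ : Perm α, ε τ * f (σ * τ) = ε σ * ∑ τ : Perm α, ε τ * f τ := by
  rw [← Equiv.sum_comp (Equiv.mulLeft σ) (fun τ => ε τ * f τ), Finset.mul_sum]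
  refine Finset.sum_congr rfl fun τ _ => ?_
  simp only [Equiv.coe_mulLeft, Perm.sign_mul, Units.val_mul, Int.cast_mul]
  linear_combination (-(ε τ * f (σ * τ))) * sign_cast_mul_self σ

def castAddPerm {p : ℕ} (r : ℕ) (γ : Perm (Fin p)) : Perm (Fin (p + r)) :=
  finSumFinEquiv.permCongr (γ.sumCongr (Equiv.refl (Fin r)))

@[simp]
lemma castAddPerm_castAdd {p r : ℕ} (γ : Perm (Fin p)) (i : Fin p) :
    castAddPerm r γ (Fin.castAdd r i) = Fin.castAdd r (γ i) := by
  simp [castAddPerm, Equiv.permCongr_apply]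

@[simp]
lemma castAddPerm_natAdd {p r : ℕ} (γ : Perm (Fin p)) (j : Fin r) :
    castAddPerm r γ (Fin.natAdd p j) = Fin.natAdd p j := by
  simp [castAddPerm, Equiv.permCongr_apply]

@[simp]
lemma sign_castAddPerm {p r : ℕ} (γ : Perm (Fin p)) :
    Perm.sign (castAddPerm r γ) = Perm.sign γ := by
  simp [castAddPerm, Perm.sign_permCongr, Perm.sign_sumCongr]

lemma sum_sign_mul_castAddPerm {p r : ℕ} (F : Perm (Fin (p + r)) → ℝ) :
    ∑ σ : Perm (Fin (p + r)), ∑ γ : Perm (Fin p), ε σ * ε γ * F (σ * castAddPerm r γ)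
      = p.factorial * ∑ ρ : Perm (Fin (p + r)), ε ρ * F ρ := by
  have h : ∀ γ : Perm (Fin p),
      ∑ σ : Perm (Fin (p + r)), ε σ * ε γ * F (σ * castAddPerm r γ)
        = ∑ ρ : Perm (Fin (p + r)), ε ρ * F ρ := fun γ => by
    rw [← Equiv.sum_comp (Equiv.mulRight (castAddPerm r γ)) (fun ρ => ε ρ * F ρ)]
    simp only [Equiv.coe_mulRight, Perm.sign_mul, sign_castAddPerm, Units.val_mul, Int.cast_mul]
  rw [Finset.sum_comm]
  simp only [h, Finset.sum_const, Finset.card_univ, Fintype.card_perm, Fintype.card_fin,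
    nsmul_eq_mul]

lemma sum_perm_apply {m : ℕ} (f : Fin (m + 1) → ℝ) (a : Fin (m + 1)) :
    ∑ ρ : Perm (Fin (m + 1)), f (ρ a) = m.factorial * ∑ k, f k := by
  calc ∑ ρ : Perm (Fin (m + 1)), f (ρ a)
      = ∑ ρ : Perm (Fin (m + 1)), f (ρ 0) := by
        rw [← Equiv.sum_comp (Equiv.mulRight (Equiv.swap 0 a))]
        simp [Perm.mul_apply]
    _ = ∑ pe : Fin (m + 1) × Perm (Fin m), f pe.1 := by
        refine (Fintype.sum_equiv Perm.decomposeFin.symm _ _ fun pe => ?_).symm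
        rw [Perm.decomposeFin_symm_apply_zero]
    _ = m.factorial * ∑ k, f k := by
        simp [Fintype.sum_prod_type, Finset.mul_sum, Fintype.card_perm]

lemma Equiv.Perm.forall_apply_castSucc_eq_iff {m : ℕ} {ρ π : Perm (Fin (m + 1))} :
    (∀ i : Fin m, ρ i.castSucc = π i.castSucc) ↔ ρ = π := by
  refine ⟨fun h => ?_, fun h _ => h ▸ rfl⟩
  have hsupp : (π⁻¹ * ρ).support ⊆ {Fin.last m} := fun a ha => by
    cases a using Fin.lastCases with
    | last => exact Finset.mem_singleton_self _
    | cast i => simp [Perm.mem_support, h] at ha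
  have hone : π⁻¹ * ρ = 1 :=
    Perm.card_support_le_one.mp ((Finset.card_le_card hsupp).trans (Finset.card_singleton _).le)
  exact (inv_mul_eq_one.mp hone).symm

def altD {V : Type*} {p q : ℕ} (Φ : DForm V p q) : DForm V p q := fun x y =>
  ∑ α : Perm (Fin p), ∑ β : Perm (Fin q), ε α * ε β * Φ (x ∘ α) (y ∘ β)

def tensorD {V : Type*} {p q r s : ℕ} (ω : DForm V p q) (η : DForm V r s) :
    DForm V (p + r) (q + s) := fun x y =>
  ω (x ∘ Fin.castAdd r) (y ∘ Fin.castAdd s) * η (x ∘ Fin.natAdd p) (y ∘ Fin.natAdd q)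

section Alternation

variable {V : Type*} {p q r s : ℕ}

lemma isAltD_altD (Φ : DForm V p q) : IsAltD (altD Φ) := by
  constructor
  · intro σ x y
    simp only [altD, mul_assoc, ← Finset.mul_sum]
    exact sum_sign_mul_mul_left σ fun α => ∑ β : Perm (Fin q), ε β * Φ (x ∘ α) (y ∘ β)
  · intro τ x y
    simp only [altD, mul_assoc, ← Finset.mul_sum]
    rw [Finset.mul_sum]
    refine Finset.sum_congr rfl fun α _ => ?_
    rw [mul_left_comm]
    exact congrArg _ (sum_sign_mul_mul_left τ fun β => Φ (x ∘ α) (y ∘ β))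

lemma dmul_eq_altD (ω : DForm V p q) (η : DForm V r s) (x : Fin (p + r) → V)
    (y : Fin (q + s) → V) :
    dmul ω η x y = 1 / (p.factorial * r.factorial * q.factorial * s.factorial) *
      altD (tensorD ω η) x y := by
  simp only [dmul, altD, tensorD, mul_assoc]
  rfl

lemma isAltD_dmul (ω : DForm V p q) (η : DForm V r s) : IsAltD (dmul ω η) := by
  constructor <;> intros <;> simp only [dmul_eq_altD, (isAltD_altD _).1, (isAltD_altD _).2] <;>
    ring

lemma altD_tensorD_altD (Φ : DForm V p q) (η : DForm V r s) (x : Fin (p + r) → V)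
    (y : Fin (q + s) → V) :
    altD (tensorD (altD Φ) η) x y = p.factorial * q.factorial * altD (tensorD Φ η) x y := by
  set T : Perm (Fin (p + r)) → Perm (Fin (q + s)) → ℝ := fun ρ π => tensorD Φ η (x ∘ ρ) (y ∘ π)
  -- `σ ∘ castAdd r ∘ γ = (σ * castAddPerm r γ) ∘ castAdd r`, while `σ ∘ natAdd p` is unchanged:
  -- the inner alternation is a reindexing of the outer one.
  have hT : ∀ (σ : Perm (Fin (p + r))) (τ : Perm (Fin (q + s))),
      tensorD (altD Φ) η (x ∘ σ) (y ∘ τ) = ∑ γ : Perm (Fin p), ∑ δ : Perm (Fin q),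
        ε γ * ε δ * T (σ * castAddPerm r γ) (τ * castAddPerm s δ) := fun σ τ => by
    simp only [T, tensorD, altD, Finset.sum_mul]
    refine Finset.sum_congr rfl fun γ _ => Finset.sum_congr rfl fun δ _ => ?_
    rw [mul_assoc]
    congr 1
    refine congrArg₂ _ (congrArg₂ Φ ?_ ?_) (congrArg₂ η ?_ ?_) <;> funext i <;> simp
  calc altD (tensorD (altD Φ) η) x y
      = ∑ σ : Perm (Fin (p + r)), ∑ γ : Perm (Fin p), ε σ * ε γ *
          ∑ τ : Perm (Fin (q + s)), ∑ δ : Perm (Fin q), ε τ * ε δ *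
            T (σ * castAddPerm r γ) (τ * castAddPerm s δ) := by
        simp only [altD, hT, Finset.mul_sum]
        refine Finset.sum_congr rfl fun σ _ => ?_
        rw [Finset.sum_comm]
        exact Finset.sum_congr rfl fun γ _ => Finset.sum_congr rfl fun τ _ =>
          Finset.sum_congr rfl fun δ _ => by ring
    _ = ∑ σ : Perm (Fin (p + r)), ∑ γ : Perm (Fin p), ε σ * ε γ *
          (q.factorial * ∑ π : Perm (Fin (q + s)), ε π * T (σ * castAddPerm r γ) π) := by
        simp only [sum_sign_mul_castAddPerm]
    _ = p.factorial * q.factorial * altD (tensorD Φ η) x y := by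
        rw [sum_sign_mul_castAddPerm (F := fun ρ =>
          q.factorial * ∑ π : Perm (Fin (q + s)), ε π * T ρ π)]
        simp only [altD, Finset.mul_sum, T]
        exact Finset.sum_congr rfl fun ρ _ => Finset.sum_congr rfl fun π _ => by ring

lemma dmul_altD (Φ : DForm V p q) (η : DForm V r s) (x : Fin (p + r) → V)
    (y : Fin (q + s) → V) :
    dmul (altD Φ) η x y = 1 / (r.factorial * s.factorial) * altD (tensorD Φ η) x y := by
  rw [dmul_eq_altD, altD_tensorD_altD]
  field_simp

end Alternation

lemma isAltD_castD {V : Type*} {p q p' q' : ℕ} (hp : p = p') (hq : q = q') {ω : DForm V p q}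
    (hω : IsAltD ω) : IsAltD (castD hp hq ω) := by
  subst hp hq
  exact hω

section Hodge

variable {V : Type*} [NormedAddCommGroup V] [InnerProductSpace ℝ V] {n : ℕ}

lemma volA_append (b : OrthonormalBasis (Fin n) ℝ V) (v : Fin n → V) (x : Fin (n - n) → V) :
    volA b (Fin.append v x) = b.toBasis.det v := by
  rw [volA, dif_pos (by omega), Module.Basis.det_apply]
  congr 1
  ext i j
  rw [Module.Basis.toMatrix_apply, OrthonormalBasis.coe_toBasis_repr_apply,
    OrthonormalBasis.repr_apply_apply, Matrix.of_apply]
  exact congrArg (inner ℝ (b i)) (Fin.append_left v x j)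

lemma sum_mul_det_comp (b : OrthonormalBasis (Fin n) ℝ V) (F : (Fin n → Fin n) → ℝ) :
    ∑ f : Fin n → Fin n, F f * b.toBasis.det (b ∘ f) = ∑ σ : Perm (Fin n), ε σ * F σ := by
  symm
  refine Fintype.sum_of_injective (fun σ : Perm (Fin n) => ⇑σ) DFunLike.coe_injective _ _
    (fun f hf => ?_) (fun σ => ?_)
  · have hinj : ¬ Function.Injective (b ∘ f) := fun h =>
      hf ⟨Equiv.ofBijective f (Finite.injective_iff_bijective.mp h.of_comp), rfl⟩
    rw [AlternatingMap.map_eq_zero_of_not_injective _ _ hinj, mul_zero]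
  · rw [← OrthonormalBasis.coe_toBasis, AlternatingMap.map_perm, Module.Basis.det_self,
      Units.smul_def, zsmul_eq_mul, mul_one, mul_comm]

lemma starScalar_of_isAltD (b : OrthonormalBasis (Fin n) ℝ V) {ω : DForm V n n}
    (hω : IsAltD ω) : starScalar b ω = ω b b := by
  have hsign : ∀ σ τ : Perm (Fin n), ε σ * (ε τ * ω (b ∘ σ) (b ∘ τ)) = ω b b := fun σ τ => by
    rw [hω.1, hω.2]
    linear_combination (ε τ * ε τ * ω b b) * sign_cast_mul_self σ + ω b b * sign_cast_mul_self τ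
  calc starScalar b ω
      = 1 / (n.factorial * n.factorial) * ∑ f : Fin n → Fin n,
          (∑ g : Fin n → Fin n, ω (b ∘ f) (b ∘ g) * b.toBasis.det (b ∘ g)) *
            b.toBasis.det (b ∘ f) := by
        simp only [starScalar, toScalar, castD, starD, volA_append, Finset.sum_mul]
        congr 1
        refine Finset.sum_congr rfl fun f _ => Finset.sum_congr rfl fun g _ => ?_
        exact mul_right_comm _ _ _
    _ = 1 / (n.factorial * n.factorial) * ∑ σ : Perm (Fin n), ∑ τ : Perm (Fin n), ω b b := by
        simp_rw [sum_mul_det_comp, Finset.mul_sum, hsign]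
    _ = ω b b := by
        simp only [Finset.sum_const, Finset.card_univ, Fintype.card_perm, Fintype.card_fin,
          nsmul_eq_mul]
        field_simp

end Hodge

section Metric

variable {V : Type*} [NormedAddCommGroup V] [InnerProductSpace ℝ V]

lemma dpow_gmetric (k : ℕ) :
    dpow (gmetric (V := V)) k = altD fun (x y : Fin (1 * k) → V) => ∏ i, ⟪x i, y i⟫ := by
  induction k with
  | zero =>
    funext x y
    simp [dpow, altD]
  | succ k ih =>
    funext x y
    show dmul (dpow gmetric k) gmetric x y = _
    rw [ih, dmul_altD]
    simp only [Nat.factorial_one, Nat.cast_one, mul_one, div_one, one_mul]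
    congr 1
    funext x y
    simp only [tensorD, gmetric]
    exact (Fin.prod_univ_castSucc fun i => ⟪x i, y i⟫).symm

lemma prod_inner_apply_castSucc {m : ℕ} {e : Fin (m + 1) → V} (he : Orthonormal ℝ e)
    (ρ π : Perm (Fin (m + 1))) :
    ∏ i : Fin m, ⟪e (ρ i.castSucc), e (π i.castSucc)⟫ = if ρ = π then 1 else 0 := by
  simp only [orthonormal_iff_ite.mp he, Fintype.prod_boole, Perm.forall_apply_castSucc_eq_iff]

lemma altD_tensorD_prod_inner_bilinD {m : ℕ} {e : Fin (m + 1) → V} (he : Orthonormal ℝ e)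
    (B : V →ₗ[ℝ] V →ₗ[ℝ] ℝ) :
    altD (tensorD (fun x y => ∏ i : Fin m, ⟪x i, y i⟫) (bilinD B)) e e
      = m.factorial * ∑ j, B (e j) (e j) := by
  have hcastSucc : ∀ i : Fin m, Fin.castAdd 1 i = i.castSucc := fun _ => rfl
  have hlast : Fin.natAdd m (0 : Fin 1) = Fin.last m := rfl
  simp only [altD, tensorD, bilinD, Function.comp_apply, hcastSucc, hlast,
    prod_inner_apply_castSucc he, ite_mul, one_mul, zero_mul, mul_ite, mul_zero,
    Finset.sum_ite_eq, Finset.mem_univ, if_true, sign_cast_mul_self]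
  exact sum_perm_apply (fun j => B (e j) (e j)) (Fin.last m)

end Metric

/-- `⋆(g^{n−1}·B)/(n−1)! = tr B` for a symmetric bilinear form `B`. -/
theorem gaussBonnet_stmt17 {V : Type*} [NormedAddCommGroup V] [InnerProductSpace ℝ V]
    {n : ℕ} (hn : 1 ≤ n) (b : OrthonormalBasis (Fin n) ℝ V)
    (B : V →ₗ[ℝ] V →ₗ[ℝ] ℝ) :
    (1 / ((n - 1).factorial : ℝ)) *
        starScalar b (castD (by omega) (by omega)
          (dmul (dpow (gmetric (V := V)) (n - 1)) (bilinD B)))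
      = ∑ i : Fin n, B (b i) (b i) := by
  have hn' : 1 * (n - 1) + 1 = n := by omega
  have he : Orthonormal ℝ fun i => b (Fin.cast hn' i) :=
    b.orthonormal.comp _ (Fin.cast_injective hn')
  rw [starScalar_of_isAltD b (isAltD_castD _ _ (isAltD_dmul _ _))]
  change 1 / _ * dmul _ _ (fun i => b (Fin.cast hn' i)) (fun i => b (Fin.cast hn' i)) = _
  rw [dpow_gmetric, dmul_altD, altD_tensorD_prod_inner_bilinD he,
    Fin.sum_congr' (fun i => B (b i) (b i)) hn', one_mul, Nat.factorial_one, Nat.cast_one]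
  field_simp
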